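/- arXiv:2302.07409 — 3 statements merged into one kernel-verified Lean document; each statement's English description precedes it below -/
import Mathlib

section
/- Let H be a class of functions from X to [k] with k ≥ 2, and let ℓ∘H = { (x,y) ↦ 𝟙[h(x) ≠ y] : h ∈ H, viewed as functions on X × [k] }. Then the Littlestone dimension of ℓ∘H is at most the Bandit Littlestone dimension of H. -/
/-- A complete binary tree of depth `d` with internal nodes labeled by `Z`. -/
abbrev BTree (Z : Type*) (d : ℕ) := ∀ t : Fin d, (Fin t → Bool) → Z

/-- A complete `k`-ary tree of depth `d` with nodes labeled by `Z`; the `k` outgoing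
edges of each node are indexed by their (distinct) labels in `Fin k`. -/
abbrev KTree (Z : Type*) (k d : ℕ) := ∀ t : Fin d, (Fin t → Fin k) → Z

/-- L-shattering of a binary tree by a boolean class. -/
def LShattered {Z : Type*} (F : Set (Z → Bool)) (d : ℕ) (tr : BTree Z d) : Prop :=
  ∀ ε : Fin d → Bool, ∃ f ∈ F, ∀ t : Fin d,
    f (tr t fun i => ε ⟨i.1, i.isLt.trans t.isLt⟩) = ε t

/-- Littlestone dimension of a boolean class. -/
noncomputable def Ldim {Z : Type*} (F : Set (Z → Bool)) : ℕ∞ :=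
  sSup ((fun n : ℕ => (n : ℕ∞)) '' {n | ∃ tr : BTree Z n, LShattered F n tr})

/-- BL-shattering: for every root-to-leaf path (sequence of edge labels `ε`) there is
`h ∈ H` avoiding every edge label taken along the path. -/
def BLShattered {X : Type*} {k : ℕ} (H : Set (X → Fin k)) (d : ℕ) (tr : KTree X k d) : Prop :=
  ∀ ε : Fin d → Fin k, ∃ h ∈ H, ∀ t : Fin d,
    h (tr t fun i => ε ⟨i.1, i.isLt.trans t.isLt⟩) ≠ ε t

/-- Bandit Littlestone dimension. -/
noncomputable def BLdim {X : Type*} {k : ℕ} (H : Set (X → Fin k)) : ℕ∞ :=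
  sSup ((fun n : ℕ => (n : ℕ∞)) '' {n | ∃ tr : KTree X k n, BLShattered H n tr})

/-- The multiclass loss class `ℓ ∘ H`, as boolean functions on `X × Fin k`. -/
def lossClass {X : Type*} {k : ℕ} (H : Set (X → Fin k)) : Set (X × Fin k → Bool) :=
  {g | ∃ h ∈ H, g = fun p => decide (h p.1 ≠ p.2)}

/-- The bit sequence along a `k`-ary path `σ`, defined recursively: take bit `true`
at step `t` iff the edge label equals the `Fin k` component of the binary node. -/
def bits {X : Type*} {k d : ℕ} (tr : BTree (X × Fin k) d) (σ : ℕ → Fin k) :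
    (t : ℕ) → t < d → Bool
  | t, ht => decide (σ t = (tr ⟨t, ht⟩ (fun i => bits tr σ i.1 (i.isLt.trans ht))).2)

lemma bits_congr {X : Type*} {k d : ℕ} (tr : BTree (X × Fin k) d) (σ σ' : ℕ → Fin k) :
    ∀ (t : ℕ) (ht : t < d), (∀ n ≤ t, σ n = σ' n) →
    bits tr σ t ht = bits tr σ' t ht := by
  intro t
  induction t using Nat.strong_induction_on with
  | _ t ih =>
    intro ht hag
    rw [bits, bits]
    have hfun : (fun i : Fin t => bits tr σ i.1 (i.isLt.trans ht)) =
        (fun i : Fin t => bits tr σ' i.1 (i.isLt.trans ht)) := by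
      funext i
      exact ih i.1 i.isLt _ (fun n hn => hag n (hn.trans i.isLt.le))
    rw [hfun, hag t le_rfl]

theorem Ldim_lossClass_le_BLdim {X : Type*} {k : ℕ} (hk : 2 ≤ k)
    (H : Set (X → Fin k)) :
    Ldim (lossClass H) ≤ BLdim H := by
  apply sSup_le
  rintro a ⟨n, ⟨tr, hsh⟩, rfl⟩
  apply le_sSup
  have hk0 : 0 < k := by omega
  -- extend a partial path to a total one
  let ext : ∀ {m : ℕ}, (Fin m → Fin k) → ℕ → Fin k :=
    fun {m} σ j => if h : j < m then σ ⟨j, h⟩ else ⟨0, hk0⟩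
  let tr' : KTree X k n := fun t σ =>
    (tr t (fun i => bits tr (ext σ) i.1 (i.isLt.trans t.isLt))).1
  refine ⟨n, ⟨tr', ?_⟩, rfl⟩
  intro ε
  set σ₀ : ℕ → Fin k := ext ε with hσ₀
  set b : Fin n → Bool := fun t => bits tr σ₀ t.1 t.isLt with hb
  obtain ⟨g, ⟨h, hH, rfl⟩, hg⟩ := hsh b
  refine ⟨h, hH, fun t => ?_⟩
  -- the node of tr' along ε equals the first component of the node of tr along b
  have hnode : tr' t (fun i => ε ⟨i.1, i.isLt.trans t.isLt⟩) =
      (tr t (fun i => b ⟨i.1, i.isLt.trans t.isLt⟩)).1 := by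
    show (tr t (fun i => bits tr (ext (fun i : Fin t.1 => ε ⟨i.1, i.isLt.trans t.isLt⟩))
        i.1 (i.isLt.trans t.isLt))).1 = _
    congr 2
    funext i
    apply bits_congr
    intro m hm
    have hmt : m < t.1 := lt_of_le_of_lt hm i.isLt
    have hmn : m < n := hmt.trans t.isLt
    simp only [ext, hσ₀, dif_pos hmt, dif_pos hmn]
  set p := tr t (fun i => b ⟨i.1, i.isLt.trans t.isLt⟩) with hp
  -- compute b t
  have hbt : b t = decide (ε t = p.2) := by
    rw [show b t = bits tr σ₀ t.1 t.isLt from rfl, bits,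
      show σ₀ t.1 = ε t from dif_pos t.isLt]
  have hgt : decide (h p.1 ≠ p.2) = decide (ε t = p.2) := by
    rw [← hbt]; exact hg t
  rw [hnode]
  by_cases hc : ε t = p.2
  · have h2 : decide (h p.1 ≠ p.2) = true := by rw [hgt]; simp [hc]
    rw [hc]
    simpa using h2
  · have h2 : decide (h p.1 ≠ p.2) = false := by rw [hgt]; simp [hc]
    have heq : h p.1 = p.2 := by simpa using h2
    rw [heq]
    exact fun hx => hc hx.symm
end

section
/- Let H ⊆ {0,1}^X have Littlestone dimension d and let T ≥ 1. In the online model where at each round the learner commits to h_t, the adversary picks a distribution D_t on X adaptively, and the learner suffers loss P_t = P_{x∼D_t}(h_t(x) ≠ h*(x)) while observing only a sample (x_t, h*(x_t)) with x_t ∼ D_t, the learner running SOA on the observed samples achieves expected cumulative loss E[Σ_{t=1}^T P_t] = O(d + log log T). -/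
/-!
By the tower property, `E[P t]` is the probability that the SOA errs on the realized sample
`x t`, so the expected cumulative loss is the expected number of mistakes of the SOA on the
realized sequence. Since `hstar` stays in the version space, every mistake of the SOA lowers
the Littlestone dimension of the version space by at least one (otherwise both parts of the
split would shatter trees of the same depth, which join into a deeper tree), so there are at
most `d` mistakes on every sample path.
-/

open MeasureTheory

section Littlestone

variable {Z : Type*} {F G : Set (Z → Bool)}

theorem LShattered.mono (hFG : F ⊆ G) {n : ℕ} {tr : BTree Z n} (h : LShattered F n tr) :
    LShattered G n tr := fun ε => by
  obtain ⟨f, hf, hft⟩ := h ε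
  exact ⟨f, hFG hf, hft⟩

theorem ldim_mono (hFG : F ⊆ G) : Ldim F ≤ Ldim G :=
  sSup_le_sSup <| Set.image_mono fun _ ⟨tr, h⟩ => ⟨tr, h.mono hFG⟩

theorem LShattered.le_ldim {n : ℕ} {tr : BTree Z n} (h : LShattered F n tr) : (n : ℕ∞) ≤ Ldim F :=
  le_sSup ⟨n, ⟨tr, h⟩, rfl⟩

theorem LShattered.truncate {n : ℕ} {tr : BTree Z n} (h : LShattered F n tr) {m : ℕ}
    (hmn : m ≤ n) : ∃ tr' : BTree Z m, LShattered F m tr' := by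
  refine ⟨fun t ε => tr ⟨t, t.isLt.trans_le hmn⟩ fun i => ε ⟨i, i.isLt⟩, fun ε => ?_⟩
  obtain ⟨f, hf, hft⟩ := h fun i => if hi : i.1 < m then ε ⟨i, hi⟩ else false
  refine ⟨f, hf, fun t => ?_⟩
  have hlt : ∀ i : Fin t, i.1 < m := fun i => i.isLt.trans t.isLt
  simpa [t.isLt, hlt] using hft ⟨t, t.isLt.trans_le hmn⟩

/-- The tree with root `x` whose `false` and `true` subtrees are `t₀` and `t₁`. -/
def BTree.node (x : Z) {n : ℕ} (t₀ t₁ : BTree Z n) : BTree Z (n + 1) :=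
  @Fin.cases n (fun t => (Fin t → Bool) → Z) (fun _ => x)
    fun i (ε : Fin (i + 1) → Bool) => (if ε 0 then t₁ else t₀) i (Fin.tail ε)

theorem LShattered.node {x : Z} {n : ℕ} {t₀ t₁ : BTree Z n}
    (h₀ : LShattered {f ∈ F | f x = false} n t₀) (h₁ : LShattered {f ∈ F | f x = true} n t₁) :
    LShattered F (n + 1) (BTree.node x t₀ t₁) := by
  intro ε
  obtain ⟨f, ⟨hfF, hfx⟩, hft⟩ : ∃ f ∈ {f ∈ F | f x = ε 0}, ∀ t : Fin n,
      f ((if ε 0 then t₁ else t₀) t fun i => Fin.tail ε ⟨i, i.isLt.trans t.isLt⟩) =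
        Fin.tail ε t := by
    cases ε 0
    exacts [h₀ _, h₁ _]
  exact ⟨f, hfF, Fin.cases hfx hft⟩

theorem exists_lShattered_of_le_ldim (hF : F.Nonempty) {n : ℕ} (h : (n : ℕ∞) ≤ Ldim F) :
    ∃ tr : BTree Z n, LShattered F n tr := by
  by_contra hno
  obtain rfl | hn := Nat.eq_zero_or_pos n
  · obtain ⟨f, hf⟩ := hF
    exact hno ⟨fun t => t.elim0, fun _ => ⟨f, hf, fun t => t.elim0⟩⟩
  have hlt : Ldim F ≤ ((n - 1 : ℕ) : ℕ∞) := sSup_le <| by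
    rintro _ ⟨k, ⟨tr, htr⟩, rfl⟩
    by_contra! hk
    exact hno (htr.truncate (by norm_cast at hk; omega))
  have := h.trans hlt
  norm_cast at this
  omega

theorem ldim_sep_add_one_le {x : Z} {b : Bool} (hb : {f ∈ F | f x = b}.Nonempty)
    (hnb : {f ∈ F | f x = !b}.Nonempty)
    (hle : Ldim {f ∈ F | f x = b} ≤ Ldim {f ∈ F | f x = !b}) :
    Ldim {f ∈ F | f x = b} + 1 ≤ Ldim F := by
  by_cases htop : Ldim {f ∈ F | f x = b} = ⊤
  · rw [htop, top_add, ← htop]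
    exact ldim_mono (Set.sep_subset F _)
  obtain ⟨n, hn⟩ := ENat.ne_top_iff_exists.mp htop
  have hsplit : ∀ c, ∃ tr : BTree Z n, LShattered {f ∈ F | f x = c} n tr := fun c => by
    obtain rfl | rfl := Bool.eq_or_eq_not c b
    exacts [exists_lShattered_of_le_ldim hb hn.le, exists_lShattered_of_le_ldim hnb (hn ▸ hle)]
  obtain ⟨t₀, h₀⟩ := hsplit false
  obtain ⟨t₁, h₁⟩ := hsplit true
  rw [← hn]
  exact_mod_cast (h₀.node h₁).le_ldim

/-- `Ldim` with the empty class sent to `⊥`: `Ldim ∅ = 0` would not tell it apart from a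
nonempty class of dimension `0`. -/
noncomputable def ldimWithBot (F : Set (Z → Bool)) : WithBot ℕ∞ :=
  open Classical in if F.Nonempty then (Ldim F : WithBot ℕ∞) else ⊥

theorem nonempty_and_ldim_le_of_ldimWithBot_le (hF : F.Nonempty)
    (h : ldimWithBot F ≤ ldimWithBot G) : G.Nonempty ∧ Ldim F ≤ Ldim G := by
  by_cases hG : G.Nonempty
  · simp_all [ldimWithBot]
  · simp [ldimWithBot, hF, hG] at h

noncomputable def soaPredict (V : Set (Z → Bool)) (z : Z) : Bool :=
  open Classical in
  decide (ldimWithBot {h ∈ V | h z = false} < ldimWithBot {h ∈ V | h z = true})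

theorem ldim_sep_add_one_le_of_soaPredict_ne {V : Set (Z → Bool)} {f : Z → Bool} (hf : f ∈ V)
    {z : Z} (hz : soaPredict V z ≠ f z) : Ldim {h ∈ V | h z = f z} + 1 ≤ Ldim V := by
  have hle : ldimWithBot {h ∈ V | h z = f z} ≤ ldimWithBot {h ∈ V | h z = !f z} := by
    cases hfz : f z <;> simp_all [soaPredict, le_of_lt]
  have hne : {h ∈ V | h z = f z}.Nonempty := ⟨f, hf, rfl⟩
  obtain ⟨hne', hldim⟩ := nonempty_and_ldim_le_of_ldimWithBot_le hne hle
  exact ldim_sep_add_one_le hne hne' hldim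

end Littlestone

section SOA

variable {X : Type*}

def versionSpace (H : Set (X → Bool)) (l : List (X × Bool)) : Set (X → Bool) :=
  {h ∈ H | ∀ p ∈ l, h p.1 = p.2}

noncomputable def soa (H : Set (X → Bool)) (l : List (X × Bool)) : X → Bool :=
  soaPredict (versionSpace H l)

def labeledPrefix (xs : ℕ → X) (f : X → Bool) (t : ℕ) : List (X × Bool) :=
  (List.range t).map fun s => (xs s, f (xs s))

section labeledPrefix

variable (H : Set (X → Bool)) (xs : ℕ → X) (f : X → Bool)

theorem versionSpace_labeledPrefix_zero : versionSpace H (labeledPrefix xs f 0) = H := by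
  simp [versionSpace, labeledPrefix]

theorem versionSpace_labeledPrefix_succ (t : ℕ) :
    versionSpace H (labeledPrefix xs f (t + 1)) =
      {h ∈ versionSpace H (labeledPrefix xs f t) | h (xs t) = f (xs t)} := by
  ext h
  simp only [versionSpace, labeledPrefix, Set.mem_ofPred_eq, List.range_succ, List.map_append,
    List.map_singleton, List.forall_mem_append, List.forall_mem_singleton, and_assoc]

theorem mem_versionSpace_labeledPrefix {f : X → Bool} (hf : f ∈ H) (t : ℕ) :
    f ∈ versionSpace H (labeledPrefix xs f t) := by
  simp [versionSpace, labeledPrefix, hf]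

open Classical Finset in
noncomputable def soaMistakes (T : ℕ) : ℕ :=
  #{t ∈ Finset.range T | soa H (labeledPrefix xs f t) (xs t) ≠ f (xs t)}

theorem soaMistakes_add_ldim_versionSpace_le {f : X → Bool} (hf : f ∈ H) (T : ℕ) :
    (soaMistakes H xs f T : ℕ∞) + Ldim (versionSpace H (labeledPrefix xs f T)) ≤ Ldim H := by
  induction T with
  | zero => simp [soaMistakes, versionSpace_labeledPrefix_zero]
  | succ T ih =>
    refine le_trans ?_ ih
    rw [soaMistakes, Finset.card_filter, Finset.sum_range_succ, ← Finset.card_filter,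
      versionSpace_labeledPrefix_succ]
    split_ifs with hmistake
    · rw [Nat.cast_add, Nat.cast_one, add_assoc, add_comm 1]
      exact add_le_add le_rfl (ldim_sep_add_one_le_of_soaPredict_ne
        (mem_versionSpace_labeledPrefix H xs hf T) hmistake)
    · rw [add_zero]
      exact add_le_add le_rfl (ldim_mono (Set.sep_subset _ _))

theorem soaMistakes_le_ldim {f : X → Bool} (hf : f ∈ H) (T : ℕ) :
    (soaMistakes H xs f T : ℕ∞) ≤ Ldim H :=
  le_of_add_le_left (soaMistakes_add_ldim_versionSpace_le H xs hf T)

end labeledPrefix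

end SOA

section Expectation

variable {ι Ω : Type*} {m0 : MeasurableSpace Ω} {μ : Measure Ω}

theorem integral_finsetSum_of_ae_eq_condExp {m : ι → MeasurableSpace Ω}
    (hm : ∀ i, m i ≤ m0) [∀ i, SigmaFinite (μ.trim (hm i))] {P g : ι → Ω → ℝ}
    (hP : ∀ i, P i =ᵐ[μ] μ[g i | m i]) (s : Finset ι) :
    ∫ ω, ∑ i ∈ s, P i ω ∂μ = ∑ i ∈ s, ∫ ω, g i ω ∂μ := by
  rw [integral_finsetSum s fun i _ => integrable_condExp.congr (hP i).symm]
  exact Finset.sum_congr rfl fun i _ => (integral_congr_ae (hP i)).trans (integral_condExp (hm i))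

/-- No integrability is needed: a non-integrable `g i` has integral `0`. -/
theorem sum_integral_le_of_sum_le [IsProbabilityMeasure μ] {g : ι → Ω → ℝ}
    (hg : ∀ i ω, 0 ≤ g i ω) {s : Finset ι} {c : ℝ} (hc : ∀ ω, ∑ i ∈ s, g i ω ≤ c) :
    ∑ i ∈ s, ∫ ω, g i ω ∂μ ≤ c := by
  classical
  set s' := s.filter fun i => Integrable (g i) μ
  have hs' : s' ⊆ s := Finset.filter_subset _ _
  calc ∑ i ∈ s, ∫ ω, g i ω ∂μ = ∫ ω, ∑ i ∈ s', g i ω ∂μ := by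
        rw [integral_finsetSum _ fun i hi => (Finset.mem_filter.mp hi).2]
        refine (Finset.sum_subset hs' fun i hi hi' => integral_undef ?_).symm
        simpa [s', hi] using hi'
    _ ≤ ∫ _, c ∂μ := integral_mono
        (integrable_finsetSum _ fun i hi => (Finset.mem_filter.mp hi).2) (integrable_const c)
        fun ω => (Finset.sum_le_sum_of_subset_of_nonneg hs' fun i _ _ => hg i ω).trans (hc ω)
    _ = c := by simp

end Expectation

theorem Real.log_log_nonneg {x : ℝ} (hx : Real.exp 1 ≤ x) : 0 ≤ Real.log (Real.log x) :=
  Real.log_nonneg <| (Real.le_log_iff_exp_le ((Real.exp_pos 1).trans_le hx)).mpr hx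

/-- Realizable online learning against an adaptive adversary playing distributions:
there is a constant `C` and a learner `A` (the SOA run on the observed samples) such that,
in any probabilistic realization of the game — `F t` is the information after `t` rounds,
`x t` is the sample drawn at round `t` (so measurable w.r.t. `F (t+1)`), the learner's
round-`t` hypothesis is `A` applied to the past samples, and `P t` is the conditional
probability (given the past) that this hypothesis errs on a fresh draw from the
adversary's round-`t` distribution — the expected cumulative loss is
`O(Ldim H + log log T)`. -/
theorem realizable_adaptive_distribution_bound {X : Type*} [MeasurableSpace X]
    (H : Set (X → Bool)) (d : ℕ) (hd : Ldim H = (d : ℕ∞)) :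
    ∃ C : ℝ, 0 < C ∧ ∃ A : List (X × Bool) → (X → Bool),
      ∀ (Ω : Type) (m0 : MeasurableSpace Ω) (μ : Measure Ω), IsProbabilityMeasure μ →
      ∀ (F : Filtration ℕ m0) (x : ℕ → Ω → X),
        (∀ t, Measurable[F (t + 1)] (x t)) →
      ∀ hstar, hstar ∈ H →
      ∀ (T : ℕ), 4 ≤ T →
      ∀ (P : ℕ → Ω → ℝ),
        (∀ t, P t =ᵐ[μ]
          μ[fun ω => if A ((List.range t).map fun s => (x s ω, hstar (x s ω))) (x t ω)
                        ≠ hstar (x t ω) then (1 : ℝ) else 0 | F t]) →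
        ∫ ω, ∑ t ∈ Finset.range T, P t ω ∂μ ≤ C * (d + Real.log (Real.log T)) := by
  refine ⟨1, one_pos, soa H, fun Ω m0 μ _ F x _ hstar hstar_mem T hT P hP => ?_⟩
  have hmistakes : ∀ ω, (soaMistakes H (x · ω) hstar T : ℝ) ≤ d := fun ω => by
    exact_mod_cast hd ▸ soaMistakes_le_ldim H (x · ω) hstar_mem T
  have hloglog : 0 ≤ Real.log (Real.log T) := Real.log_log_nonneg <| by
    have : (4 : ℝ) ≤ T := by exact_mod_cast hT
    linarith [Real.exp_one_lt_d9]
  calc ∫ ω, ∑ t ∈ Finset.range T, P t ω ∂μ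
      = ∑ t ∈ Finset.range T, ∫ ω, (if soa H (labeledPrefix (x · ω) hstar t) (x t ω)
          ≠ hstar (x t ω) then (1 : ℝ) else 0) ∂μ :=
        integral_finsetSum_of_ae_eq_condExp F.le hP _
    _ ≤ d := sum_integral_le_of_sum_le (fun t ω => by positivity) fun ω => by
        simpa [soaMistakes, Finset.natCast_card_filter] using hmistakes ω
    _ ≤ 1 * (d + Real.log (Real.log T)) := by linarith
end

section
/- For any hypothesis class H ⊆ [k]^X, every binary tree L-shattered by the loss class ℓ∘H (with nodes labeled by pairs (x,y) ∈ X × [k]) of depth d gives rise to a complete k-ary tree of depth d that is BL-shattered by H; the construction recurses: at a node (x_0, y_0) place x_0 with k outgoing edges labeled by the distinct elements of [k], recursing on the right subtree along the edge labeled y_0 and on the left subtree along every other edge. -/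
/-- Auxiliary: the boolean path induced by a `[k]`-valued path. -/
def Baux {X : Type*} {k d : ℕ} (tr : BTree (X × Fin k) d) (ε : Fin d → Fin k) :
    (n : ℕ) → n < d → Bool
  | n, h => decide (ε ⟨n, h⟩ =
      (tr ⟨n, h⟩ (fun i => Baux tr ε i.1 (i.isLt.trans h))).2)
  termination_by n => n
  decreasing_by all_goals exact i.isLt

lemma Baux_congr {X : Type*} {k d : ℕ} (tr : BTree (X × Fin k) d)
    (ε ε' : Fin d → Fin k) (n : ℕ) (h : n < d)
    (hagree : ∀ i : ℕ, i ≤ n → ∀ hi : i < d, ε ⟨i, hi⟩ = ε' ⟨i, hi⟩) :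
    Baux tr ε n h = Baux tr ε' n h := by
  induction n using Nat.strong_induction_on with
  | _ n ih =>
    rw [Baux, Baux]
    have h1 : (fun i : Fin ((⟨n, h⟩ : Fin d) : ℕ) => Baux tr ε i.1 (i.isLt.trans h))
        = fun i => Baux tr ε' i.1 (i.isLt.trans h) := by
      funext i
      exact ih i.1 i.isLt (i.isLt.trans h)
        (fun j hj hjd => hagree j (hj.trans i.isLt.le) hjd)
    rw [h1, hagree n le_rfl h]

/-- Every binary tree of depth `d` L-shattered by the loss class `ℓ ∘ H` (nodes labeled by
pairs `(x, y) ∈ X × [k]`) gives rise to a complete `k`-ary tree of depth `d` that is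
BL-shattered by `H`. -/
theorem blshattered_of_loss_lshattered {X : Type*} {k : ℕ} (hk : 2 ≤ k)
    (H : Set (X → Fin k)) (d : ℕ) (tr : BTree (X × Fin k) d)
    (htr : LShattered (lossClass H) d tr) :
    ∃ ktr : KTree X k d, BLShattered H d ktr := by
  have hk0 : 0 < k := by omega
  -- extend a prefix to a full path by 0
  let ext : ∀ t : Fin d, (Fin t → Fin k) → (Fin d → Fin k) := fun t p i =>
    if hi : i.1 < t.1 then p ⟨i.1, hi⟩ else ⟨0, hk0⟩
  refine ⟨fun t p => (tr t (fun i => Baux tr (ext t p) i.1 (i.isLt.trans t.isLt))).1, ?_⟩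
  intro ε
  obtain ⟨f, hfH, hf⟩ := htr (fun t => Baux tr ε t.1 t.isLt)
  obtain ⟨h, hH, rfl⟩ := hfH
  refine ⟨h, hH, fun t => ?_⟩
  -- the extension of the prefix of ε agrees with ε below t
  have key : ∀ i : Fin ((t : Fin d) : ℕ),
      Baux tr (ext t (fun i => ε ⟨i.1, i.isLt.trans t.isLt⟩)) i.1 (i.isLt.trans t.isLt)
        = Baux tr ε i.1 (i.isLt.trans t.isLt) := by
    intro i
    apply Baux_congr
    intro j hj hjd
    have : j < t.1 := lt_of_le_of_lt hj i.isLt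
    simp only [ext]
    rw [dif_pos this]
  have hft := hf t
  simp only [] at hft
  -- rewrite the node
  have hnode : (tr t fun i =>
      Baux tr (ext t (fun i => ε ⟨i.1, i.isLt.trans t.isLt⟩)) i.1 (i.isLt.trans t.isLt))
      = tr t fun i => Baux tr ε i.1 (i.isLt.trans t.isLt) := by
    congr 1
    funext i
    exact key i
  show h (tr t fun i =>
      Baux tr (ext t (fun i => ε ⟨i.1, i.isLt.trans t.isLt⟩)) i.1 (i.isLt.trans t.isLt)).1 ≠ ε t
  rw [hnode]
  set z := tr t fun i => Baux tr ε i.1 (i.isLt.trans t.isLt) with hz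
  have hft' : decide (h z.1 ≠ z.2) = Baux tr ε t.1 t.isLt := hft
  rw [Baux] at hft'
  -- Baux at t unfolds to decide (ε t = z.2)
  have hz2 : (tr ⟨t.1, t.isLt⟩ (fun i => Baux tr ε i.1 (i.isLt.trans t.isLt))) = z := by
    rw [hz]
  by_cases hc : ε t = z.2
  · -- then Baux = true so h z.1 ≠ z.2 = ε t
    rw [hc]
    have : decide (h z.1 ≠ z.2) = true := by
      rw [hft']
      simp only [hz2]
      simpa using hc
    simpa using this
  · -- then Baux = false so h z.1 = z.2 ≠ ε t
    have : decide (h z.1 ≠ z.2) = false := by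
      rw [hft']
      simp only [hz2]
      simpa using hc
    have hzz : h z.1 = z.2 := by simpa using this
    rw [hzz]
    exact fun he => hc he.symm
end
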